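/- arXiv:1307.4468 — 2 statements merged into one kernel-verified Lean document; each statement's English description precedes it below -/
import Mathlib

section
/- The CTL* formula AG(p → EXp) → (p → EGp) is valid: in every transition structure M and along every fullpath σ, if M,σ ⊨ AG(p → EXp) and M,σ ⊨ p then M,σ ⊨ EGp. -/
/-- CTL* formulas over a set `L` of atomic propositions, built using
negation, conjunction, and the temporal connectives X (`next`),
U (`untl`) and A (`all`). -/
inductive Formula (L : Type) : Type
  | atom : L → Formula L
  | neg  : Formula L → Formula L
  | and  : Formula L → Formula L → Formula L
  | next : Formula L → Formula L
  | untl : Formula L → Formula L → Formula L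
  | all  : Formula L → Formula L

/-- A transition structure `M = (S, R, g)`: a nonempty set of states,
a total transition relation, and a labelling of states with sets of atoms. -/
structure TransStruct (L : Type) where
  S : Type
  nonempty : Nonempty S
  R : S → S → Prop
  total : ∀ s : S, ∃ t : S, R s t
  g : S → Set L

/-- A fullpath: an infinite sequence of states with consecutive states related by `R`. -/
def Fullpath {L : Type} (M : TransStruct L) : Type :=
  { σ : ℕ → M.S // ∀ i : ℕ, M.R (σ i) (σ (i + 1)) }

/-- The suffix `σ≥ᵢ` of a fullpath. -/
def Fullpath.suffix {L : Type} {M : TransStruct L} (σ : Fullpath M) (i : ℕ) :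
    Fullpath M :=
  ⟨fun n => σ.1 (n + i), fun n => by
    have h := σ.2 (n + i)
    simpa [Nat.add_right_comm] using h⟩

/-- Truth of a CTL* formula at a fullpath of a transition structure. -/
def sat {L : Type} (M : TransStruct L) : Formula L → Fullpath M → Prop
  | .atom p, σ => p ∈ M.g (σ.1 0)
  | .neg α, σ => ¬ sat M α σ
  | .and α β, σ => sat M α σ ∧ sat M β σ
  | .next α, σ => sat M α (σ.suffix 1)
  | .untl α β, σ =>
      ∃ i : ℕ, sat M β (σ.suffix i) ∧ ∀ j : ℕ, j < i → sat M α (σ.suffix j)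
  | .all α, σ => ∀ σ' : Fullpath M, σ'.1 0 = σ.1 0 → sat M α σ'

/-- A formula is valid iff it is true at every fullpath of every transition structure. -/
def valid {L : Type} (α : Formula L) : Prop :=
  ∀ (M : TransStruct L) (σ : Fullpath M), sat M α σ

/-- A formula is satisfiable iff it is true at some fullpath of some transition structure. -/
def satisfiable {L : Type} (α : Formula L) : Prop :=
  ∃ (M : TransStruct L) (σ : Fullpath M), sat M α σ

/-- The abbreviation `true`, here rendered (relative to the atom `q`) as the
tautology `¬(q ∧ ¬q)`. -/
def tru {L : Type} (q : L) : Formula L :=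
  .neg (.and (.atom q) (.neg (.atom q)))

/-- `Fα ≡ true U α`. -/
def Fm {L : Type} (q : L) (α : Formula L) : Formula L := .untl (tru q) α

/-- `Gα ≡ ¬F¬α`. -/
def Gm {L : Type} (q : L) (α : Formula L) : Formula L := .neg (Fm q (.neg α))

/-- `Eα ≡ ¬A¬α`. -/
def Em {L : Type} (α : Formula L) : Formula L := .neg (.all (.neg α))

/-- `α → β`, defined classically as `¬(α ∧ ¬β)`. -/
def Impl {L : Type} (α β : Formula L) : Formula L := .neg (.and α (.neg β))


section Aux
open Classical

variable {L : Type} {M : TransStruct L}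

/-- Merge a fullpath `τ` (up to index `n`) with a fullpath `σ''` starting at `τ.1 n`. -/
def mergePath (τ : Fullpath M) (n : ℕ) (σ'' : Fullpath M) (h : σ''.1 0 = τ.1 n) :
    Fullpath M :=
  ⟨fun k => if k < n then τ.1 k else σ''.1 (k - n), by
    intro k
    rcases lt_trichotomy (k + 1) n with hk | hk | hk
    · simp only [if_pos hk, if_pos (by omega : k < n)]
      exact τ.2 k
    · have hkn : k < n := by omega
      simp only [if_neg (by omega : ¬ k + 1 < n), if_pos hkn]
      have : k + 1 - n = 0 := by omega
      rw [this, h, ← hk]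
      exact τ.2 k
    · simp only [if_neg (by omega : ¬ k + 1 < n), if_neg (by omega : ¬ k < n)]
      have : k + 1 - n = (k - n) + 1 := by omega
      rw [this]
      exact σ''.2 (k - n)⟩

lemma mergePath_le (τ : Fullpath M) (n : ℕ) (σ'' : Fullpath M) (h : σ''.1 0 = τ.1 n)
    {k : ℕ} (hk : k ≤ n) : (mergePath τ n σ'' h).1 k = τ.1 k := by
  rcases lt_or_eq_of_le hk with hk' | rfl
  · simp [mergePath, hk']
  · simp [mergePath, h]

lemma mergePath_succ (τ : Fullpath M) (n : ℕ) (σ'' : Fullpath M) (h : σ''.1 0 = τ.1 n) :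
    (mergePath τ n σ'' h).1 (n + 1) = σ''.1 1 := by
  simp [mergePath]

/-- The tautology `tru q` holds at every fullpath. -/
lemma sat_tru (q : L) (σ : Fullpath M) : sat M (tru q) σ := by
  simp [tru, sat]

lemma sat_Impl (α β : Formula L) (σ : Fullpath M) :
    sat M (Impl α β) σ ↔ (sat M α σ → sat M β σ) := by
  simp only [Impl, sat]; tauto

lemma sat_Em (α : Formula L) (σ : Fullpath M) :
    sat M (Em α) σ ↔ ∃ σ' : Fullpath M, σ'.1 0 = σ.1 0 ∧ sat M α σ' := by
  simp only [Em, sat]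
  rw [not_forall]
  simp only [Classical.not_imp, not_not]

/-- `Gα` holds iff `α` holds at every suffix. -/
lemma sat_Gm (q : L) (α : Formula L) (σ : Fullpath M) :
    sat M (Gm q α) σ ↔ ∀ i, sat M α (σ.suffix i) := by
  simp only [Gm, Fm, sat]
  constructor
  · intro h i
    by_contra hc
    exact h ⟨i, hc, fun j _ => sat_tru q _⟩
  · rintro h ⟨i, hi, -⟩
    exact hi (h i)

end Aux

/-- The CTL* formula `AG(p → EXp) → (p → EGp)` is valid: in every
transition structure `M` and along every fullpath `σ`, if `M,σ ⊨ AG(p → EXp)`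
and `M,σ ⊨ p` then `M,σ ⊨ EGp`. -/
theorem valid_AG_p_imp_EXp_imp_p_imp_EGp {L : Type} [Countable L] (p : L) :
    valid (Impl (.all (Gm p (Impl (.atom p) (Em (.next (.atom p))))))
               (Impl (.atom p) (Em (Gm p (.atom p))))) := by
  intro M σ
  rw [sat_Impl, sat_Impl, sat_Em]
  intro hAG hp
  have hp' : p ∈ M.g (σ.1 0) := hp
  have hAG' : ∀ τ : Fullpath M, τ.1 0 = σ.1 0 →
      ∀ n, sat M (Impl (.atom p) (Em (.next (.atom p)))) (τ.suffix n) :=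
    fun τ hτ => (sat_Gm p _ τ).mp (hAG τ hτ)
  have key : ∀ (τ : Fullpath M), τ.1 0 = σ.1 0 → ∀ n, p ∈ M.g (τ.1 n) →
      ∃ σ'' : Fullpath M, σ''.1 0 = τ.1 n ∧ p ∈ M.g (σ''.1 1) := by
    intro τ hτ n hpn
    have h1 := (sat_Impl _ _ _).mp (hAG' τ hτ n)
        (by simpa [sat, Fullpath.suffix] using hpn)
    rw [sat_Em] at h1
    obtain ⟨σ'', h0, hx⟩ := h1
    exact ⟨σ'', by simpa [Fullpath.suffix] using h0,
      by simpa [sat, Fullpath.suffix] using hx⟩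
  -- Good states: reachable along a σ₀-path and satisfying p.
  set Good : M.S → Prop :=
    fun s => p ∈ M.g s ∧ ∃ (τ : Fullpath M) (n : ℕ), τ.1 0 = σ.1 0 ∧ τ.1 n = s
    with hGood
  have step : ∀ s, Good s → ∃ t, M.R s t ∧ Good t := by
    rintro s ⟨hps, τ, n, hτ0, hτn⟩
    obtain ⟨σ'', h0, hp1⟩ := key τ hτ0 n (hτn ▸ hps)
    refine ⟨σ''.1 1, ?_, hp1, mergePath τ n σ'' h0, n + 1, ?_, mergePath_succ τ n σ'' h0⟩
    · have := σ''.2 0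
      rwa [h0, hτn] at this
    · rw [mergePath_le τ n σ'' h0 (Nat.zero_le n), hτ0]
  have good0 : Good (σ.1 0) := ⟨hp', σ, 0, rfl, rfl⟩
  classical
  let f : {s // Good s} → {s // Good s} :=
    fun x => ⟨(step x.1 x.2).choose, (step x.1 x.2).choose_spec.2⟩
  have hf : ∀ x : {s // Good s}, M.R x.1 (f x).1 :=
    fun x => (step x.1 x.2).choose_spec.1
  let ρfun : ℕ → {s // Good s} := fun n => f^[n] ⟨σ.1 0, good0⟩
  have hρsucc : ∀ n, ρfun (n + 1) = f (ρfun n) := fun n =>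
    Function.iterate_succ_apply' f n _
  let ρ : Fullpath M := ⟨fun n => (ρfun n).1, by
    intro i
    show M.R (ρfun i).1 (ρfun (i + 1)).1
    rw [hρsucc i]
    exact hf (ρfun i)⟩
  refine ⟨ρ, rfl, ?_⟩
  rw [sat_Gm]
  intro i
  show sat M (.atom p) _
  simp only [sat, Fullpath.suffix]
  exact (ρfun (0 + i)).2.1
end

section
/- Let φ be a CTL* formula and let h₀,...,h_k be φ-hues with hⱼ r_X hⱼ₊₁ for each j < k and h_k r_X h₀. Suppose every formula αUβ ∈ h₀ has some j ≤ k with β ∈ hⱼ. Then for every i ≤ k, every formula αUβ ∈ hᵢ has some j ≤ k with β ∈ hⱼ. -/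
/-- The set of subformulas of a formula (including the formula itself). -/
def Formula.subf {L : Type} : Formula L → Set (Formula L)
  | .atom p => {.atom p}
  | .neg α => insert (.neg α) α.subf
  | .and α β => insert (.and α β) (α.subf ∪ β.subf)
  | .next α => insert (.next α) α.subf
  | .untl α β => insert (.untl α β) (α.subf ∪ β.subf)
  | .all α => insert (.all α) α.subf

/-- The closure set `cl φ = {ψ, ¬ψ : ψ a subformula of φ}`. -/
def closureSet {L : Type} (φ : Formula L) : Set (Formula L) :=
  φ.subf ∪ (Formula.neg '' φ.subf)

/-- `a ⊆ cl φ` is maximally propositionally consistent (MPC): (M1) for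
`α, β ∈ cl φ`, if `β = ¬α` then `β ∈ a` iff `α ∉ a`; (M2) for `α, β ∈ cl φ`,
if `α∧β ∈ cl φ` then `α∧β ∈ a` iff both `α ∈ a` and `β ∈ a`. -/
def MPC {L : Type} (φ : Formula L) (a : Set (Formula L)) : Prop :=
  (∀ α ∈ closureSet φ, ∀ β ∈ closureSet φ,
      β = Formula.neg α → (β ∈ a ↔ α ∉ a)) ∧
  (∀ α ∈ closureSet φ, ∀ β ∈ closureSet φ,
      Formula.and α β ∈ closureSet φ → (Formula.and α β ∈ a ↔ α ∈ a ∧ β ∈ a))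

/-- `a ⊆ cl φ` is a hue for `φ`: (H1) MPC; (H2) if `αUβ ∈ a` and `β ∉ a` then
`α ∈ a`; (H3) if `αUβ ∈ cl φ \ a` then `β ∉ a`; (H4) if `Aα ∈ a` then `α ∈ a`. -/
def IsHue {L : Type} (φ : Formula L) (a : Set (Formula L)) : Prop :=
  a ⊆ closureSet φ ∧ MPC φ a ∧
  (∀ α β : Formula L, Formula.untl α β ∈ a → β ∉ a → α ∈ a) ∧
  (∀ α β : Formula L, Formula.untl α β ∈ closureSet φ →
      Formula.untl α β ∉ a → β ∉ a) ∧
  (∀ α : Formula L, Formula.all α ∈ a → α ∈ a)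

/-- `a r_X b`: (R1) `Xα ∈ a` implies `α ∈ b`; (R2) `¬Xα ∈ a` implies `¬α ∈ b`;
(R3) `αUβ ∈ a` and `¬β ∈ a` imply `αUβ ∈ b`; (R4) `¬(αUβ) ∈ a` and `α ∈ a`
imply `¬(αUβ) ∈ b`. -/
def rX {L : Type} (a b : Set (Formula L)) : Prop :=
  (∀ α : Formula L, Formula.next α ∈ a → α ∈ b) ∧
  (∀ α : Formula L, Formula.neg (Formula.next α) ∈ a → Formula.neg α ∈ b) ∧
  (∀ α β : Formula L, Formula.untl α β ∈ a → Formula.neg β ∈ a →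
      Formula.untl α β ∈ b) ∧
  (∀ α β : Formula L, Formula.neg (Formula.untl α β) ∈ a → α ∈ a →
      Formula.neg (Formula.untl α β) ∈ b)


lemma Formula.subf_self {L : Type} (φ : Formula L) : φ ∈ φ.subf := by
  cases φ <;> simp [Formula.subf]

lemma Formula.subf_trans {L : Type} {φ ψ : Formula L} (h : ψ ∈ φ.subf) :
    ψ.subf ⊆ φ.subf := by
  induction φ with
  | atom p => simp [Formula.subf] at h; subst h; exact subset_rfl
  | neg α ih =>
    rcases h with h | h
    · exact subset_of_eq (by rw [h])
    · exact (ih h).trans (Set.subset_insert _ _)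
  | and α β ih1 ih2 =>
    rcases h with h | h | h
    · exact subset_of_eq (by rw [h])
    · exact (ih1 h).trans ((Set.subset_union_left).trans (Set.subset_insert _ _))
    · exact (ih2 h).trans ((Set.subset_union_right).trans (Set.subset_insert _ _))
  | next α ih =>
    rcases h with h | h
    · exact subset_of_eq (by rw [h])
    · exact (ih h).trans (Set.subset_insert _ _)
  | untl α β ih1 ih2 =>
    rcases h with h | h | h
    · exact subset_of_eq (by rw [h])
    · exact (ih1 h).trans ((Set.subset_union_left).trans (Set.subset_insert _ _))
    · exact (ih2 h).trans ((Set.subset_union_right).trans (Set.subset_insert _ _))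
  | all α ih =>
    rcases h with h | h
    · exact subset_of_eq (by rw [h])
    · exact (ih h).trans (Set.subset_insert _ _)

lemma untl_mem_subf {L : Type} {φ α β : Formula L}
    (h : Formula.untl α β ∈ closureSet φ) : β ∈ φ.subf := by
  rcases h with h | ⟨ψ, _, h⟩
  · exact Formula.subf_trans h (Or.inr (Or.inr (Formula.subf_self β)))
  · cases h

/-- Let `h₀, ..., h_k` be `φ`-hues with `hⱼ r_X hⱼ₊₁` for `j < k`
and `h_k r_X h₀`. If every `αUβ ∈ h₀` has some `j ≤ k` with `β ∈ hⱼ`, then for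
every `i ≤ k`, every `αUβ ∈ hᵢ` has some `j ≤ k` with `β ∈ hⱼ`. -/
theorem loop_fulfilling_of_first {L : Type} [Countable L] (φ : Formula L)
    (k : ℕ) (h : ℕ → Set (Formula L))
    (hhue : ∀ j : ℕ, j ≤ k → IsHue φ (h j))
    (hstep : ∀ j : ℕ, j < k → rX (h j) (h (j + 1)))
    (hloop : rX (h k) (h 0))
    (hfirst : ∀ α β : Formula L, Formula.untl α β ∈ h 0 →
        ∃ j : ℕ, j ≤ k ∧ β ∈ h j) :
    ∀ i : ℕ, i ≤ k → ∀ α β : Formula L, Formula.untl α β ∈ h i →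
        ∃ j : ℕ, j ≤ k ∧ β ∈ h j := by
  
  intro i hi α β hmem
  by_contra hc
  push_neg at hc
  have hcl : Formula.untl α β ∈ closureSet φ := (hhue i hi).1 hmem
  have hβs : β ∈ φ.subf := untl_mem_subf hcl
  have hβ : β ∈ closureSet φ := Or.inl hβs
  have hnβ : Formula.neg β ∈ closureSet φ := Or.inr ⟨β, hβs, rfl⟩
  have hneg : ∀ j, j ≤ k → Formula.neg β ∈ h j := fun j hj =>
    (((hhue j hj).2.1).1 β hβ (Formula.neg β) hnβ rfl).2 (hc j hj)
  have key : ∀ m, i + m ≤ k → Formula.untl α β ∈ h (i + m) := by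
    intro m
    induction m with
    | zero => intro _; simpa using hmem
    | succ n ih =>
      intro hle
      have h1 : i + n ≤ k := by omega
      have h2 : i + n < k := by omega
      have := (hstep (i+n) h2).2.2.1 α β (ih h1) (hneg (i+n) h1)
      rwa [Nat.add_assoc] at this
  have hk : Formula.untl α β ∈ h k := by
    have := key (k - i) (by omega)
    rwa [Nat.add_sub_cancel' hi] at this
  have h0 : Formula.untl α β ∈ h 0 := hloop.2.2.1 α β hk (hneg k le_rfl)
  obtain ⟨j, hj, hbj⟩ := hfirst α β h0
  exact hc j hj hbj
end
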